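/- Let S be a triangulated category with a good metric {M_i}, and let F ∈ 𝔖(S). Then the functor Hom(−, F) takes any strong triangle A → B → C → ΣA in L(S) to a long exact sequence. -/

import Mathlib

/-!
Write `F ≅ colim Y(dₖ)`. Since representables are finitely presented, a map `Y(x) → F` factors
through some `Y(dₖ)` and dies in `F` iff it dies at a later stage; hence `Hom(Y(−), F)` is
homological on `S`, because each `Hom(−, dₖ)` is. If moreover `F ⊥ Y(Mₙ)`, then any `f` whose
cone lies in `Mₙ₊₁` induces a bijection on `Hom(Y(−), F)`: injective because the cone is in `Mₙ`,
surjective because the desuspended cone is. For a Cauchy sequence `a` the transition maps thus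
eventually induce bijections, so `Hom(colim Y(a), F) = lim Hom(Y(aᵢ), F)` is computed at any large
enough stage `N`. Exactness at `Hom(colim Y(b), F)` is then exactness of
`Hom(Y(c_N), F) → Hom(Y(b_N), F) → Hom(Y(a_N), F)`.
-/

open CategoryTheory CategoryTheory.Limits CategoryTheory.Pretriangulated ZeroObject

universe v u

namespace Paper

variable (S : Type u) [Category.{v} S] [HasZeroObject S] [HasShift S ℤ]
  [Preadditive S] [∀ n : ℤ, (shiftFunctor S n).Additive] [Pretriangulated S]

/-- The cone of `f` lies in `P`: every completion of `f` to a distinguished triangle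
has its third object in `P`. -/
def coneIn (P : Set S) {X Y : S} (f : X ⟶ Y) : Prop :=
  ∀ (Z : S) (g : Y ⟶ Z) (h : Z ⟶ X⟦(1 : ℤ)⟧),
    Triangle.mk f g h ∈ (distTriang S) → Z ∈ P

/-- A good metric on the triangulated category `S`: a descending chain of full
(iso-closed) subcategories `M i`, each containing `0`, closed under extensions, and with
`Σ^{-1} M (i+1) ∪ M (i+1) ∪ Σ M (i+1) ⊆ M i`. -/
structure GoodMetric : Type (max u v) where
  M : ℕ → Set S
  zero_mem : ∀ i, (0 : S) ∈ M i
  iso_closed : ∀ i ⦃X Y : S⦄, (X ≅ Y) → X ∈ M i → Y ∈ M i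
  anti : ∀ i, M (i + 1) ⊆ M i
  shift_mem : ∀ i ⦃X : S⦄, X ∈ M (i + 1) → X⟦(1 : ℤ)⟧ ∈ M i
  shiftNeg_mem : ∀ i ⦃X : S⦄, X ∈ M (i + 1) → X⟦(-1 : ℤ)⟧ ∈ M i
  ext_mem : ∀ i (T : Triangle S), T ∈ (distTriang S) →
    T.obj₁ ∈ M i → T.obj₃ ∈ M i → T.obj₂ ∈ M i

variable {S}

/-- A sequence `a : ℕ ⥤ S` is Cauchy with respect to a good metric: for every `n` there
is `N` such that for all `j ≥ i ≥ N` the cone of `a i ⟶ a j` lies in `M n`. -/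
def IsCauchy (μ : GoodMetric S) (a : ℕ ⥤ S) : Prop :=
  ∀ n : ℕ, ∃ N : ℕ, ∀ i j : ℕ, N ≤ i → ∀ h : i ≤ j,
    coneIn S (μ.M n) (a.map (homOfLE h))

/-- A completion of a map of sequences `f : a ⟶ b` to a sequence of distinguished
triangles `a_* ⟶ b_* ⟶ c_* ⟶ Σ a_*`. -/
structure TriCompletion {a b : ℕ ⥤ S} (f : a ⟶ b) : Type (max u v) where
  c : ℕ ⥤ S
  g : b ⟶ c
  h : c ⟶ a ⋙ shiftFunctor S (1 : ℤ)
  dist : ∀ i, Triangle.mk (f.app i) (g.app i) (h.app i) ∈ distTriang S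

/-- `f : a ⟶ b` is a type-`n` morphism of Cauchy sequences: in any completion to a
Cauchy sequence of distinguished triangles the third objects lie in `M n` eventually. -/
def IsTypeN (μ : GoodMetric S) (n : ℕ) {a b : ℕ ⥤ S} (f : a ⟶ b) : Prop :=
  ∀ T : TriCompletion f, IsCauchy μ T.c → ∃ N, ∀ i, N ≤ i → T.c.obj i ∈ μ.M n


/-- The colimit in `Mod-S = Sᵒᵖ ⥤ AddCommGrp` of the Yoneda image of a sequence. -/
noncomputable def colimY (a : ℕ ⥤ S) : Sᵒᵖ ⥤ AddCommGrpCat.{v} :=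
  colimit (a ⋙ preadditiveYoneda)

/-- The induced map on colimits of Yoneda images. -/
noncomputable def colimYmap {a b : ℕ ⥤ S} (f : a ⟶ b) : colimY a ⟶ colimY b :=
  colimMap (Functor.whiskerRight f preadditiveYoneda)

/-- A morphism `F : colim Y(a) ⟶ colim Y(b)` in `L(S)` is of type-`n` with respect to
`(a, b)` if some map of subsequences `f : a∘ρ ⟶ b∘σ` with `F = colim Y(f)` (compatibly
with the canonical maps from the colimits over the subsequences) is a type-`n`
morphism of Cauchy sequences. -/
def MorTypeN (μ : GoodMetric S) (n : ℕ) (a b : ℕ ⥤ S)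
    (F : colimY a ⟶ colimY b) : Prop :=
  ∃ (ρ σ : ℕ → ℕ) (hρ : StrictMono ρ) (hσ : StrictMono σ)
    (f : hρ.monotone.functor ⋙ a ⟶ hσ.monotone.functor ⋙ b),
    IsTypeN μ n f ∧
      colimit.pre (a ⋙ preadditiveYoneda) hρ.monotone.functor ≫ F =
        colimMap (Functor.whiskerRight f preadditiveYoneda) ≫
          colimit.pre (b ⋙ preadditiveYoneda) hσ.monotone.functor

/-- Membership in `L_P`: colimits of Yoneda images of Cauchy sequences contained in `P`. -/
def InLsub (μ : GoodMetric S) (P : Set S) (X : Sᵒᵖ ⥤ AddCommGrpCat.{v}) : Prop :=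
  ∃ a : ℕ ⥤ S, IsCauchy μ a ∧ (∀ i, a.obj i ∈ P) ∧ Nonempty (colimY a ≅ X)

/-- Membership in `L(S)`: colimits of Yoneda images of Cauchy sequences. -/
def InL (μ : GoodMetric S) (X : Sᵒᵖ ⥤ AddCommGrpCat.{v}) : Prop :=
  ∃ a : ℕ ⥤ S, IsCauchy μ a ∧ Nonempty (colimY a ≅ X)

/-- Membership in `𝔖(S) = L(S) ∩ ⋃ₙ Y(Mₙ)^⊥`. -/
def InFrak (μ : GoodMetric S) (X : Sᵒᵖ ⥤ AddCommGrpCat.{v}) : Prop :=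
  InL μ X ∧ ∃ n, ∀ m ∈ μ.M n, ∀ φ : preadditiveYoneda.obj m ⟶ X, φ = 0

/-- Membership in `N_i = L_i ∩ 𝔖(S)`. -/
def InN (μ : GoodMetric S) (i : ℕ) (X : Sᵒᵖ ⥤ AddCommGrpCat.{v}) : Prop :=
  InLsub μ (μ.M i) X ∧ InFrak μ X

/-- A Cauchy sequence of distinguished triangles in `S`. -/
structure CauchyTriSeq (μ : GoodMetric S) : Type (max u v) where
  a : ℕ ⥤ S
  b : ℕ ⥤ S
  f : a ⟶ b
  ha : IsCauchy μ a
  hb : IsCauchy μ b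
  comp : TriCompletion f
  hc : IsCauchy μ comp.c

/-- `(A, B, C, u, v)` underlies a strong triangle in `L(S)`: it is isomorphic to the
colimit of the Yoneda image of a Cauchy sequence of distinguished triangles. -/
def StrongTriangleOn (μ : GoodMetric S) (A B C : Sᵒᵖ ⥤ AddCommGrpCat.{v})
    (u : A ⟶ B) (v : B ⟶ C) : Prop :=
  ∃ (T : CauchyTriSeq μ) (eA : colimY T.a ≅ A) (eB : colimY T.b ≅ B)
    (eC : colimY T.comp.c ≅ C),
    colimYmap T.f ≫ eB.hom = eA.hom ≫ u ∧
    colimYmap T.comp.g ≫ eC.hom = eB.hom ≫ v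

section Yoneda

open Opposite

variable {C : Type*} [Category.{v} C] [Preadditive C]

lemma preadditiveYoneda_obj_hom_app_apply {x z : C} {G : Cᵒᵖ ⥤ AddCommGrpCat.{v}}
    (β : preadditiveYoneda.obj x ⟶ G) (α : z ⟶ x) :
    β.app (op z) α = G.map α.op (β.app (op x) (𝟙 x)) :=
  (congrArg (β.app (op z)) (Category.comp_id α).symm).trans
    (NatTrans.naturality_apply β α.op (𝟙 x))

lemma preadditiveYoneda_obj_hom_ext {x : C} {G : Cᵒᵖ ⥤ AddCommGrpCat.{v}}
    {β β' : preadditiveYoneda.obj x ⟶ G} (h : β.app (op x) (𝟙 x) = β'.app (op x) (𝟙 x)) :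
    β = β' := by
  ext ⟨z⟩ (α : z ⟶ x)
  rw [preadditiveYoneda_obj_hom_app_apply, h, ← preadditiveYoneda_obj_hom_app_apply]

lemma preadditiveYoneda_map_comp_app_id {x y : C} {G : Cᵒᵖ ⥤ AddCommGrpCat.{v}}
    (α : x ⟶ y) (β : preadditiveYoneda.obj y ⟶ G) :
    (preadditiveYoneda.map α ≫ β).app (op x) (𝟙 x) = β.app (op x) α :=
  congrArg (β.app (op x)) (Category.id_comp α)

variable {J : Type} [SmallCategory J] [IsFiltered J] (d : J ⥤ C)

-- `Hom(Y(x), colim Y(d)) = colim Hom(x, dₖ)`, read off at the element `𝟙 x`.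
lemma exists_preadditiveYoneda_map_comp_colimit_ι {x : C}
    (β : preadditiveYoneda.obj x ⟶ colimit (d ⋙ preadditiveYoneda)) :
    ∃ (k : J) (α : x ⟶ d.obj k),
      preadditiveYoneda.map α ≫ colimit.ι (d ⋙ preadditiveYoneda) k = β := by
  have := preservesSmallestFilteredColimits_of_preservesFilteredColimits
    (forget AddCommGrpCat.{v})
  obtain ⟨k, α, hα⟩ := Concrete.isColimit_exists_rep _
    (isColimitOfPreserves ((evaluation Cᵒᵖ AddCommGrpCat.{v}).obj (op x))
      (colimit.isColimit (d ⋙ preadditiveYoneda)))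
    (β.app (op x) (𝟙 x))
  exact ⟨k, α,
    preadditiveYoneda_obj_hom_ext ((preadditiveYoneda_map_comp_app_id _ _).trans hα)⟩

lemma exists_comp_map_eq_zero_of_preadditiveYoneda_map_comp_colimit_ι_eq_zero {x : C}
    {k : J} (α : x ⟶ d.obj k)
    (h : preadditiveYoneda.map α ≫ colimit.ι (d ⋙ preadditiveYoneda) k = 0) :
    ∃ (k' : J) (g : k ⟶ k'), α ≫ d.map g = 0 := by
  have := preservesSmallestFilteredColimits_of_preservesFilteredColimits
    (forget AddCommGrpCat.{v})
  have h' : (colimit.ι (d ⋙ preadditiveYoneda) k).app (op x) α =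
      (colimit.ι (d ⋙ preadditiveYoneda) k).app (op x) 0 := by
    rw [map_zero, ← preadditiveYoneda_map_comp_app_id, h]
    rfl
  obtain ⟨k', g, _, hg⟩ := Concrete.isColimit_exists_of_rep_eq _
    (isColimitOfPreserves ((evaluation Cᵒᵖ AddCommGrpCat.{v}).obj (op x))
      (colimit.isColimit (d ⋙ preadditiveYoneda))) _ _ h'
  exact ⟨k', g, hg.trans (map_zero _)⟩

end Yoneda

-- `Hom(colim c, F) = lim Hom(c i, F)`, an inverse system that is constant from `N` on.
lemma bijective_colimit_ι_comp_of_bijective_map_comp {C : Type*} [Category C]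
    (c : ℕ ⥤ C) [HasColimit c] {F : C} {N : ℕ}
    (h : ∀ i (hi : N ≤ i),
      Function.Bijective fun β : c.obj i ⟶ F => c.map (homOfLE hi) ≫ β) :
    Function.Bijective fun φ : colimit c ⟶ F => colimit.ι c N ≫ φ := by
  have hN : ∀ i, N ≤ i + N := fun i => Nat.le_add_left N i
  refine ⟨fun φ φ' hφ => colimit.hom_ext fun i => ?_, fun t => ?_⟩
  · rw [← colimit.w c (homOfLE (Nat.le_add_right i N)), Category.assoc, Category.assoc]
    congr 1
    apply (h _ (hN i)).injective
    simp only [colimit.w_assoc]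
    exact hφ
  · choose u hu using fun j (hj : N ≤ j) => (h j hj).surjective t
    have hu_compat : ∀ j k (hj : N ≤ j) (hjk : j ≤ k),
        c.map (homOfLE hjk) ≫ u k (hj.trans hjk) = u j hj := by
      intro j k hj hjk
      apply (h j hj).injective
      simp only [← Category.assoc, ← Functor.map_comp, homOfLE_comp, hu]
    -- `u j` only exists for `j ≥ N`, so the leg at `i` passes through `c (i + N)`.
    let κ : Cocone c :=
      { pt := F
        ι := { app := fun i => c.map (homOfLE (Nat.le_add_right i N)) ≫ u (i + N) (hN i)
               naturality := fun i j hij => by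
                 have hij' : i + N ≤ j + N := Nat.add_le_add_right (leOfHom hij) N
                 refine Eq.trans ?_ (Category.comp_id _).symm
                 rw [← hu_compat _ _ (hN i) hij']
                 simp only [← Category.assoc, ← Functor.map_comp]
                 rfl } }
    exact ⟨colimit.desc c κ, (colimit.ι_desc κ N).trans (hu _ _)⟩

def IsHomologicalOnRepresentables (F : Sᵒᵖ ⥤ AddCommGrpCat.{v}) : Prop :=
  ∀ T ∈ distTriang S, ∀ β : preadditiveYoneda.obj T.obj₂ ⟶ F,
    preadditiveYoneda.map T.mor₁ ≫ β = 0 →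
      ∃ γ : preadditiveYoneda.obj T.obj₃ ⟶ F, preadditiveYoneda.map T.mor₂ ≫ γ = β

lemma isHomologicalOnRepresentables_colimit {J : Type} [SmallCategory J] [IsFiltered J]
    (d : J ⥤ S) : IsHomologicalOnRepresentables (colimit (d ⋙ preadditiveYoneda)) := by
  intro T hT β hβ
  obtain ⟨k, α, rfl⟩ := exists_preadditiveYoneda_map_comp_colimit_ι d β
  obtain ⟨k', g, hg⟩ :=
    exists_comp_map_eq_zero_of_preadditiveYoneda_map_comp_colimit_ι_eq_zero d (T.mor₁ ≫ α)
      (by rwa [Functor.map_comp, Category.assoc])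
  obtain ⟨γ, hγ⟩ := Triangle.yoneda_exact₂ T hT (α ≫ d.map g) (by rwa [← Category.assoc])
  refine ⟨preadditiveYoneda.map γ ≫ colimit.ι (d ⋙ preadditiveYoneda) k', ?_⟩
  rw [← Category.assoc, ← Functor.map_comp, ← hγ, Functor.map_comp, Category.assoc]
  exact congrArg (preadditiveYoneda.map α ≫ ·) (colimit.w (d ⋙ preadditiveYoneda) g)

lemma IsHomologicalOnRepresentables.of_iso {F G : Sᵒᵖ ⥤ AddCommGrpCat.{v}} (e : F ≅ G)
    (hF : IsHomologicalOnRepresentables F) : IsHomologicalOnRepresentables G := by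
  intro T hT β hβ
  obtain ⟨γ, hγ⟩ := hF T hT (β ≫ e.inv) (by rw [reassoc_of% hβ, zero_comp])
  exact ⟨γ ≫ e.hom, by rw [reassoc_of% hγ, Iso.inv_hom_id, Category.comp_id]⟩

lemma InL.isHomologicalOnRepresentables {μ : GoodMetric S} {F : Sᵒᵖ ⥤ AddCommGrpCat.{v}}
    (hF : InL μ F) : IsHomologicalOnRepresentables F := by
  obtain ⟨a, -, ⟨e⟩⟩ := hF
  exact (isHomologicalOnRepresentables_colimit a).of_iso e

lemma bijective_preadditiveYoneda_map_comp_of_distTriang {F : Sᵒᵖ ⥤ AddCommGrpCat.{v}}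
    (hF : IsHomologicalOnRepresentables F) {T : Triangle S} (hT : T ∈ distTriang S)
    (h₃ : ∀ φ : preadditiveYoneda.obj T.obj₃ ⟶ F, φ = 0)
    (h₃' : ∀ φ : preadditiveYoneda.obj (T.obj₃⟦(-1 : ℤ)⟧) ⟶ F, φ = 0) :
    Function.Bijective fun β : preadditiveYoneda.obj T.obj₂ ⟶ F =>
      preadditiveYoneda.map T.mor₁ ≫ β := by
  refine ⟨fun β β' hββ' => ?_, fun β => hF _ (inv_rot_of_distTriang T hT) β (h₃' _)⟩
  obtain ⟨γ, hγ⟩ := hF T hT (β - β')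
    (by rw [Preadditive.comp_sub, sub_eq_zero]; exact hββ')
  rw [← sub_eq_zero, ← hγ, h₃ γ, comp_zero]

lemma bijective_preadditiveYoneda_map_comp_of_coneIn (μ : GoodMetric S)
    {F : Sᵒᵖ ⥤ AddCommGrpCat.{v}} (hF : IsHomologicalOnRepresentables F) {n : ℕ}
    (hperp : ∀ m ∈ μ.M n, ∀ φ : preadditiveYoneda.obj m ⟶ F, φ = 0)
    {X Y : S} {f : X ⟶ Y} (hf : coneIn S (μ.M (n + 1)) f) :
    Function.Bijective fun β : preadditiveYoneda.obj Y ⟶ F =>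
      preadditiveYoneda.map f ≫ β := by
  obtain ⟨Z, g, h, hT⟩ := distinguished_cocone_triangle f
  have hZ := hf Z g h hT
  exact bijective_preadditiveYoneda_map_comp_of_distTriang hF hT
    (hperp Z (μ.anti n hZ)) (hperp _ (μ.shiftNeg_mem n hZ))

lemma IsCauchy.eventually_bijective_colimit_ι_comp {μ : GoodMetric S} {a : ℕ ⥤ S}
    (ha : IsCauchy μ a) {F : Sᵒᵖ ⥤ AddCommGrpCat.{v}} (hF : IsHomologicalOnRepresentables F)
    {n : ℕ} (hperp : ∀ m ∈ μ.M n, ∀ φ : preadditiveYoneda.obj m ⟶ F, φ = 0) :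
    ∀ᶠ N in Filter.atTop, Function.Bijective fun φ : colimit (a ⋙ preadditiveYoneda) ⟶ F =>
      colimit.ι (a ⋙ preadditiveYoneda) N ≫ φ := by
  obtain ⟨N₀, hN₀⟩ := ha (n + 1)
  filter_upwards [Filter.eventually_ge_atTop N₀] with N hN
  exact bijective_colimit_ι_comp_of_bijective_map_comp _ fun i hi =>
    bijective_preadditiveYoneda_map_comp_of_coneIn μ hF hperp (hN₀ N i hN hi)

lemma TriCompletion.colimYmap_comp_colimYmap {a b : ℕ ⥤ S} {f : a ⟶ b}
    (T : TriCompletion f) : colimYmap f ≫ colimYmap T.g = 0 := by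
  refine colimit.hom_ext fun i => ?_
  have hz : f.app i ≫ T.g.app i = 0 := comp_distTriang_mor_zero₁₂ _ (T.dist i)
  simp only [colimYmap, colimY, ι_colimMap_assoc, ι_colimMap, Functor.whiskerRight_app]
  rw [← Category.assoc, ← Functor.map_comp, hz, Functor.map_zero, zero_comp]
  exact comp_zero.symm

lemma CauchyTriSeq.exists_colimYmap_comp_eq {μ : GoodMetric S} (T : CauchyTriSeq μ)
    {F : Sᵒᵖ ⥤ AddCommGrpCat.{v}} (hF : InFrak μ F) (ψ : colimY T.b ⟶ F)
    (hψ : colimYmap T.f ≫ ψ = 0) : ∃ φ : colimY T.comp.c ⟶ F, colimYmap T.comp.g ≫ φ = ψ := by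
  unfold colimY colimYmap at *
  obtain ⟨hL, n, hperp⟩ := hF
  have hH := hL.isHomologicalOnRepresentables
  obtain ⟨N, hb, hc⟩ := ((T.hb.eventually_bijective_colimit_ι_comp hH hperp).and
    (T.hc.eventually_bijective_colimit_ι_comp hH hperp)).exists
  have hψN :
      preadditiveYoneda.map (T.f.app N) ≫ colimit.ι (T.b ⋙ preadditiveYoneda) N ≫ ψ = 0 := by
    simpa only [ι_colimMap_assoc, Functor.whiskerRight_app, comp_zero] using
      congrArg (colimit.ι (T.a ⋙ preadditiveYoneda) N ≫ ·) hψ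
  obtain ⟨t, ht⟩ := hH _ (T.comp.dist N) _ hψN
  obtain ⟨φ, rfl⟩ := hc.surjective t
  refine ⟨φ, hb.injective ?_⟩
  simp only [ι_colimMap_assoc, Functor.whiskerRight_app]
  exact ht

/-- Lemma 3.303: if `F ∈ 𝔖(S)` then `Hom(−, F)` takes any strong triangle
`A ⟶ B ⟶ C` in `L(S)` to a long exact sequence; equivalently (by rotation) the sequence
`Hom(C,F) ⟶ Hom(B,F) ⟶ Hom(A,F)` is exact. -/
theorem statement7 (μ : GoodMetric S) {A B C : Sᵒᵖ ⥤ AddCommGrpCat.{v}}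
    (u : A ⟶ B) (v : B ⟶ C) (hT : StrongTriangleOn μ A B C u v)
    (F : Sᵒᵖ ⥤ AddCommGrpCat.{v}) (hF : InFrak μ F) :
    (∀ φ : C ⟶ F, u ≫ v ≫ φ = 0) ∧
    (∀ ψ : B ⟶ F, u ≫ ψ = 0 → ∃ φ : C ⟶ F, v ≫ φ = ψ) := by
  obtain ⟨T, eA, eB, eC, hu, hv⟩ := hT
  obtain rfl : u = eA.inv ≫ colimYmap T.f ≫ eB.hom := by rw [hu, Iso.inv_hom_id_assoc]
  obtain rfl : v = eB.inv ≫ colimYmap T.comp.g ≫ eC.hom := by rw [hv, Iso.inv_hom_id_assoc]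
  refine ⟨fun φ => ?_, fun ψ hψ => ?_⟩
  · simp [reassoc_of% T.comp.colimYmap_comp_colimYmap]
  · obtain ⟨φ, hφ⟩ := T.exists_colimYmap_comp_eq hF (eB.hom ≫ ψ)
      (by simpa [cancel_epi] using hψ)
    exact ⟨eC.inv ≫ φ, by simp [hφ]⟩

end Paper
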